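/- Directed recursive formula (Theorem 4): in a directed setting, for r ∈ {1,…,n}, MMJ(Ω_r, Ω_{n+1} | Ω_{[1,n+1]}) = min over t ∈ {1,…,n} of max( MMJ(Ω_r, Ω_t | Ω_{[1,n]}), d(Ω_t, Ω_{n+1}) ). -/

import Mathlib

/-- The maximum jump (distance between consecutive points) along a list of points. -/
def maxJump {α : Type*} (d : α → α → ℝ) : List α → ℝ
  | a :: b :: l => max (d a b) (maxJump d (b :: l))
  | _ => 0

/-- `L` is a path from `i` to `j` all of whose points lie in `S`. -/
def IsPathIn {α : Type*} (S : Set α) (i j : α) (L : List α) : Prop :=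
  L.head? = some i ∧ L.getLast? = some j ∧ ∀ x ∈ L, x ∈ S

/-- Min-Max-Jump distance between `i` and `j` under the context `S`. -/
noncomputable def MMJ {α : Type*} (d : α → α → ℝ) (S : Set α) (i j : α) : ℝ :=
  sInf {m : ℝ | ∃ L : List α, IsPathIn S i j L ∧ maxJump d L = m}

/-!
A path from `i` to a new point `z` through `insert z S` may be cut at its first visit to `z`:
what precedes it is a path inside `S` ending at some `t`, followed by the single jump `t → z`.
Conversely every path in `S` ending at `t` extends by that jump. So the best paths to `z` are
obtained by minimising `max (MMJ d S i t) (d t z)` over the last point `t` before `z`.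
-/

section

variable {α : Type*} {d : α → α → ℝ}

lemma maxJump_nonneg (hd : ∀ x y, 0 ≤ d x y) : ∀ L : List α, 0 ≤ maxJump d L
  | [] | [_] => le_rfl
  | a :: b :: _ => le_max_of_le_left (hd a b)

lemma maxJump_le_maxJump_append (hd : ∀ x y, 0 ≤ d x y) :
    ∀ l l' : List α, maxJump d l ≤ maxJump d (l ++ l')
  | [], _ | [_], _ => maxJump_nonneg hd _
  | _ :: b :: l, l' => max_le_max le_rfl (maxJump_le_maxJump_append hd (b :: l) l')

lemma maxJump_append_singleton :
    ∀ {l : List α} {a : α} (x : α), l.getLast? = some a →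
      maxJump d (l ++ [x]) = max (maxJump d l) (d a x)
  | [], _, _, h => by simp at h
  | [b], a, x, h => by
      obtain rfl : b = a := by simpa using h
      exact max_comm _ _
  | b :: c :: l, a, x, h => by
      rw [List.getLast?_cons_cons] at h
      change max (d b c) (maxJump d (c :: l ++ [x])) = max (max (d b c) (maxJump d (c :: l))) _
      rw [maxJump_append_singleton x h, max_assoc]

lemma IsPathIn.append_singleton {S : Set α} {i t : α} {P : List α} (hP : IsPathIn S i t P)
    (z : α) : IsPathIn (insert z S) i z (P ++ [z]) := by
  obtain ⟨hhead, -, hmem⟩ := hP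
  refine ⟨?_, by simp, fun x hx => ?_⟩
  · simp [List.head?_append, hhead]
  · rcases List.mem_append.mp hx with hx | hx
    · exact Set.mem_insert_of_mem z (hmem x hx)
    · exact (List.mem_singleton.mp hx) ▸ Set.mem_insert z S

lemma MMJ_le_maxJump (hd : ∀ x y, 0 ≤ d x y) {S : Set α} {i j : α} {L : List α}
    (hL : IsPathIn S i j L) : MMJ d S i j ≤ maxJump d L :=
  csInf_le ⟨0, by rintro _ ⟨L, -, rfl⟩; exact maxJump_nonneg hd L⟩ ⟨L, hL, rfl⟩

lemma le_MMJ {S : Set α} {i j : α} {m : ℝ} (hi : i ∈ S) (hj : j ∈ S)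
    (h : ∀ L, IsPathIn S i j L → m ≤ maxJump d L) : m ≤ MMJ d S i j :=
  le_csInf ⟨_, [i, j], ⟨rfl, rfl, by simp [hi, hj]⟩, rfl⟩ (by rintro _ ⟨L, hL, rfl⟩; exact h L hL)

lemma MMJ_insert_le_max (hd : ∀ x y, 0 ≤ d x y) {S : Set α} {i t : α} (hi : i ∈ S)
    (ht : t ∈ S) (z : α) : MMJ d (insert z S) i z ≤ max (MMJ d S i t) (d t z) := by
  have hextend : ∀ P, IsPathIn S i t P → MMJ d (insert z S) i z ≤ max (maxJump d P) (d t z) :=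
    fun P hP => maxJump_append_singleton z hP.2.1 ▸ MMJ_le_maxJump hd (hP.append_singleton z)
  -- `max · (d t z)` commutes with the infimum over `P`: split on which argument of `max` wins.
  rcases le_or_gt (MMJ d (insert z S) i z) (d t z) with h | h
  · exact le_max_of_le_right h
  · exact le_max_of_le_left <| le_MMJ hi ht fun P hP =>
      (le_max_iff.mp (hextend P hP)).resolve_right h.not_ge

lemma exists_isPathIn_of_isPathIn_insert (hd : ∀ x y, 0 ≤ d x y) {S : Set α} {i z : α}
    {L : List α} (hL : IsPathIn (insert z S) i z L) (hiz : i ≠ z) :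
    ∃ t P, IsPathIn S i t P ∧ max (maxJump d P) (d t z) ≤ maxJump d L := by
  obtain ⟨hhead, hlast, hmem⟩ := hL
  obtain ⟨P, rest, rfl, hzP⟩ := List.eq_append_cons_of_mem (List.mem_of_getLast? hlast)
  have hP : P ≠ [] := by
    rintro rfl
    exact hiz (by simpa using hhead.symm)
  obtain ⟨t, ht⟩ : ∃ t, P.getLast? = some t := ⟨_, List.getLast?_eq_some_getLast hP⟩
  refine ⟨t, P, ⟨?_, ht, fun x hx => ?_⟩, ?_⟩
  · rwa [List.head?_append_of_ne_nil _ hP] at hhead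
  · exact (hmem x (List.mem_append_left _ hx)).resolve_left (ne_of_mem_of_not_mem hx hzP)
  · rw [← maxJump_append_singleton z ht, show P ++ z :: rest = P ++ [z] ++ rest by simp]
    exact maxJump_le_maxJump_append hd _ _

theorem MMJ_insert_eq_inf' (hd : ∀ x y, 0 ≤ d x y) {T : Finset α} (hT : T.Nonempty) {i z : α}
    (hi : i ∈ T) (hz : z ∉ T) :
    MMJ d (insert z ↑T) i z = T.inf' hT fun t => max (MMJ d T i t) (d t z) := by
  refine le_antisymm (Finset.le_inf' _ _ fun t ht => MMJ_insert_le_max hd hi ht z) ?_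
  refine le_MMJ (Set.mem_insert_of_mem _ hi) (Set.mem_insert z _) fun L hL => ?_
  obtain ⟨t, P, hP, hPL⟩ :=
    exists_isPathIn_of_isPathIn_insert hd hL (ne_of_mem_of_not_mem hi hz)
  calc T.inf' hT (fun t => max (MMJ d T i t) (d t z))
      ≤ max (MMJ d T i t) (d t z) := Finset.inf'_le _ (hP.2.2 t (List.mem_of_getLast? hP.2.1))
    _ ≤ max (maxJump d P) (d t z) := max_le_max_right _ (MMJ_le_maxJump hd hP)
    _ ≤ maxJump d L := hPL

end

theorem mmj_directed_recursion {α : Type*} (d : α → α → ℝ)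
    (hd : ∀ x y, 0 ≤ d x y) (Ω : ℕ → α)
    (n : ℕ) (hn : 1 ≤ n) (hinj : Set.InjOn Ω (Set.Icc 1 (n + 1)))
    (r : ℕ) (hr : r ∈ Finset.Icc 1 n) :
    MMJ d (Ω '' Set.Icc 1 (n + 1)) (Ω r) (Ω (n + 1)) =
      (Finset.Icc 1 n).inf' (Finset.nonempty_Icc.mpr hn)
        (fun t => max (MMJ d (Ω '' Set.Icc 1 n) (Ω r) (Ω t))
          (d (Ω t) (Ω (n + 1)))) := by
  classical
  set T := (Finset.Icc 1 n).image Ω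
  have hT : Ω '' Set.Icc 1 n = ↑T := by simp [T]
  have hinsert : Ω '' Set.Icc 1 (n + 1) = insert (Ω (n + 1)) ↑T := by
    rw [← Set.insert_Icc_right_eq_Icc_add_one (by omega), Set.image_insert_eq, hT]
  have hfresh : Ω (n + 1) ∉ T := by
    simp only [T, Finset.mem_image, Finset.mem_Icc, not_exists, not_and]
    rintro t ⟨h1, h2⟩ h
    have := hinj ⟨h1, by omega⟩ ⟨by omega, le_rfl⟩ h
    omega
  rw [hinsert, hT, MMJ_insert_eq_inf' hd ((Finset.nonempty_Icc.mpr hn).image Ω)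
    (Finset.mem_image_of_mem Ω hr) hfresh, Finset.inf'_image]
  rfl
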